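/- Fix n ≤ k. The map sending a standard Young tableau of shape (k, k, n) (encoded as a partition (B, M, T) of {1,…,2k+n} with |B| = |M| = k and |T| = n) to the arc set of its m-diagram is injective: two such tableaux with the same arc set are equal. -/

import Mathlib

open scoped Classical

/-- The `j`-th smallest element (0-indexed) of a finite set of naturals (default `0`). -/
noncomputable def nthSmallest (s : Finset ℕ) (j : ℕ) : ℕ := (s.sort (· ≤ ·)).getD j 0

/-- `(R, S)` satisfies the tableau condition: `|S| ≤ |R|` and for every `j ≤ |S|`, the `j`-th
smallest element of `S` is greater than the `j`-th smallest element of `R`. -/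
def TableauCond (R S : Finset ℕ) : Prop :=
  S.card ≤ R.card ∧ ∀ j < S.card, nthSmallest R j < nthSmallest S j

/-- The greedy matching of `S` into `R`: processing the elements `i` of `S` in increasing
order, `greedy R S i = max { j ∈ R : j < i and j ≠ greedy R S i' for every i' ∈ S with i' < i }`
(with value `0` when this set is empty or `i ∉ S`). -/
noncomputable def greedy (R S : Finset ℕ) (i : ℕ) : ℕ :=
  Nat.strongRecOn i fun i ih =>
    ((R.filter fun j => j < i ∧ ∀ i' (_ : i' ∈ S) (h : i' < i), j ≠ ih i' h).max).unbotD 0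

/-- The arcs produced by the greedy matching of `S` into `R`, as ordered pairs
`(left endpoint, right endpoint)`. -/
noncomputable def arcsOf (R S : Finset ℕ) : Finset (ℕ × ℕ) :=
  S.image fun i => (greedy R S i, i)

/-- `(B, M, T)` (bottom, middle, top rows) encodes a three-row standard Young tableau with
`N` boxes: the rows partition `{1,…,N}`, row lengths weakly decrease from bottom to top, and
consecutive rows satisfy the tableau condition. -/
def ThreeRowSYT (N : ℕ) (B M T : Finset ℕ) : Prop :=
  Disjoint B M ∧ Disjoint B T ∧ Disjoint M T ∧
  B ∪ M ∪ T = Finset.Icc 1 N ∧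
  T.card ≤ M.card ∧ M.card ≤ B.card ∧
  TableauCond B M ∧ TableauCond M T

/-- Two arcs `(p,q)` and `(p',q')` (with `p<q`, `p'<q'`) cross if `p<p'<q<q'` or
`p'<p<q'<q`. -/
def Cross (a b : ℕ × ℕ) : Prop :=
  (a.1 < b.1 ∧ b.1 < a.2 ∧ a.2 < b.2) ∨ (b.1 < a.1 ∧ a.1 < b.2 ∧ b.2 < a.2)

/-!
Under the tableau condition the greedy matching never runs out: an element `i` of the upper
row has more elements of the lower row below it than of its own row, so some element of the
lower row below `i` is still unused. Hence every arc ends in a row one above the row it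
starts in, and the rows can be read off the arc set: `M ∪ T` is the set of right endpoints,
`T` the set of right endpoints of arcs whose left endpoint is itself a right endpoint, and
`B` the complement of `M ∪ T` in `{1,…,N}`.
-/

open Finset

theorem nthSmallest_eq_orderEmbOfFin (s : Finset ℕ) (j : Fin #s) :
    nthSmallest s j = s.orderEmbOfFin rfl j :=
  List.getD_eq_getElem _ _ _

theorem TableauCond.card_filter_lt_lt {R S : Finset ℕ} (h : TableauCond R S) {i : ℕ}
    (hi : i ∈ S) : #{x ∈ S | x < i} < #{x ∈ R | x < i} := by
  obtain ⟨j, rfl⟩ : ∃ j, S.orderEmbOfFin rfl j = i := by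
    rwa [← Set.mem_range, range_orderEmbOfFin]
  set eS := S.orderEmbOfFin rfl
  set eR := R.orderEmbOfFin rfl
  set j' : Fin #R := Fin.castLE h.1 j
  have hS : {x ∈ S | x < eS j} = (Iio j).map eS.toEmbedding := by
    ext x
    constructor
    · rintro hx
      obtain ⟨hxS, hlt⟩ := mem_filter.1 hx
      obtain ⟨j₀, rfl⟩ : ∃ j₀, eS j₀ = x := by rwa [← Set.mem_range, range_orderEmbOfFin]
      simpa using hlt
    · simp only [mem_map, mem_Iio]
      rintro ⟨j₀, hj₀, rfl⟩
      exact mem_filter.2 ⟨orderEmbOfFin_mem _ _ _, by simpa using hj₀⟩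
  have hR : (Iic j').map eR.toEmbedding ⊆ {x ∈ R | x < eS j} := by
    simp only [subset_iff, mem_map, mem_Iic, mem_filter]
    rintro _ ⟨j₀, hj₀, rfl⟩
    refine ⟨orderEmbOfFin_mem _ _ _, (eR.monotone hj₀).trans_lt ?_⟩
    exact (nthSmallest_eq_orderEmbOfFin R j').symm.trans_lt
      ((h.2 j j.2).trans_eq (nthSmallest_eq_orderEmbOfFin S j))
  calc #{x ∈ S | x < eS j} = j := by rw [hS, card_map, Fin.card_Iio]
    _ < #((Iic j').map eR.toEmbedding) := by simp [j']
    _ ≤ _ := card_le_card hR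

theorem greedy_eq (R S : Finset ℕ) (i : ℕ) :
    greedy R S i = ({j ∈ R | j < i ∧ ∀ i' ∈ S, i' < i → j ≠ greedy R S i'}.max).unbotD 0 := by
  rw [greedy, Nat.strongRecOn_eq]
  rfl

theorem greedy_mem_of_card_lt {R S : Finset ℕ} {i : ℕ}
    (hi : #{x ∈ S | x < i} < #{x ∈ R | x < i}) : greedy R S i ∈ R := by
  set F := {j ∈ R | j < i ∧ ∀ i' ∈ S, i' < i → j ≠ greedy R S i'}
  have hsub : {x ∈ R | x < i} \ {x ∈ S | x < i}.image (greedy R S) ⊆ F := by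
    intro x hx
    simp only [F, mem_sdiff, mem_filter, mem_image, not_exists, not_and, and_imp] at hx ⊢
    exact ⟨hx.1.1, hx.1.2, fun i' hi' hlt hx' => hx.2 i' hi' hlt hx'.symm⟩
  have hF : F.Nonempty := by
    rw [← card_pos]
    have := le_card_sdiff ({x ∈ S | x < i}.image (greedy R S)) {x ∈ R | x < i}
    have := card_image_le (s := {x ∈ S | x < i}) (f := greedy R S)
    have := card_le_card hsub
    omega
  rw [greedy_eq, ← coe_max' hF, WithBot.unbotD_coe]
  exact (mem_filter.1 (max'_mem F hF)).1

theorem TableauCond.greedy_mem {R S : Finset ℕ} (h : TableauCond R S) {i : ℕ} (hi : i ∈ S) :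
    greedy R S i ∈ R :=
  greedy_mem_of_card_lt (h.card_filter_lt_lt hi)

theorem mem_arcsOf {R S : Finset ℕ} {a : ℕ × ℕ} :
    a ∈ arcsOf R S ↔ a.2 ∈ S ∧ greedy R S a.2 = a.1 := by
  obtain ⟨p, q⟩ := a
  simp only [arcsOf, mem_image, Prod.mk.injEq]
  constructor
  · rintro ⟨i, hi, hp, rfl⟩
    exact ⟨hi, hp⟩
  · rintro ⟨hq, hp⟩
    exact ⟨q, hq, hp, rfl⟩

theorem image_snd_arcsOf (R S : Finset ℕ) : (arcsOf R S).image Prod.snd = S := by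
  simp [arcsOf, image_image, Function.comp_def]

theorem image_snd_arcsOf_union (B M T : Finset ℕ) :
    (arcsOf B M ∪ arcsOf M T).image Prod.snd = M ∪ T := by
  rw [image_union, image_snd_arcsOf, image_snd_arcsOf]

namespace ThreeRowSYT

variable {N : ℕ} {B M T : Finset ℕ}

theorem top_eq (h : ThreeRowSYT N B M T) :
    T = {a ∈ arcsOf B M ∪ arcsOf M T | a.1 ∈ M ∪ T}.image Prod.snd := by
  obtain ⟨hBM, hBT, -, -, -, -, hBMc, hMTc⟩ := h
  ext q
  simp only [mem_image, mem_filter, mem_union, mem_arcsOf]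
  constructor
  · intro hq
    exact ⟨(greedy M T q, q), ⟨Or.inr ⟨hq, rfl⟩, Or.inl (hMTc.greedy_mem hq)⟩, rfl⟩
  · rintro ⟨a, ⟨⟨hqM, hp⟩ | ⟨hqT, -⟩, hpMT⟩, rfl⟩
    · have hpB : a.1 ∈ B := hp ▸ hBMc.greedy_mem hqM
      exact (hpMT.elim (disjoint_left.1 hBM hpB) (disjoint_left.1 hBT hpB)).elim
    · exact hqT

theorem middle_eq (h : ThreeRowSYT N B M T) : M = (M ∪ T) \ T :=
  (union_sdiff_cancel_right h.2.2.1).symm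

theorem bottom_eq (h : ThreeRowSYT N B M T) : B = Icc 1 N \ (M ∪ T) := by
  rw [← h.2.2.2.1, union_assoc, union_sdiff_cancel_right]
  exact disjoint_union_right.2 ⟨h.1, h.2.1⟩

end ThreeRowSYT

theorem mDiagram_injective_general (n k : ℕ)
    (B M T B' M' T' : Finset ℕ)
    (h : ThreeRowSYT (2 * k + n) B M T)
    (h' : ThreeRowSYT (2 * k + n) B' M' T')
    (harcs : arcsOf B M ∪ arcsOf M T = arcsOf B' M' ∪ arcsOf M' T') :
    B = B' ∧ M = M' ∧ T = T' := by
  have hMT : M ∪ T = M' ∪ T' := by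
    rw [← image_snd_arcsOf_union B M T, ← image_snd_arcsOf_union B' M' T', harcs]
  have hT : T = T' := by
    rw [h.top_eq, h'.top_eq, harcs, hMT]
  refine ⟨?_, ?_, hT⟩
  · rw [h.bottom_eq, h'.bottom_eq, hMT]
  · rw [h.middle_eq, h'.middle_eq, hMT, hT]

/-- For `n ≤ k`, the map sending a standard Young tableau of shape `(k,k,n)` to the arc set
of its m-diagram is injective. -/
theorem mDiagram_injective (n k : ℕ) (hnk : n ≤ k)
    (B M T B' M' T' : Finset ℕ)
    (h : ThreeRowSYT (2 * k + n) B M T)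
    (hB : B.card = k) (hM : M.card = k) (hT : T.card = n)
    (h' : ThreeRowSYT (2 * k + n) B' M' T')
    (hB' : B'.card = k) (hM' : M'.card = k) (hT' : T'.card = n)
    (harcs : arcsOf B M ∪ arcsOf M T = arcsOf B' M' ∪ arcsOf M' T') :
    B = B' ∧ M = M' ∧ T = T' :=
  mDiagram_injective_general n k B M T B' M' T' h h' harcs
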